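/- Let μ>0 and H: T² → R continuous with sup|H| ≤ c < 1 and C¹ with bounded gradient. The operator B: ℓ²(Z²∖{0}) → L²(T²) defined by B[f] = Σ_{k≠0} f_k ∇·[ e^{ik·x} cosh(μ|k|(1+H(x)))/cosh²(μ|k|) · k/|k|² ] is a Hilbert–Schmidt operator, i.e., Σ_{k≠0} ‖B[e_k]‖²_{L²(T²)} < ∞; in particular B is compact. -/

import Mathlib

/-!
Differentiating the single term gives `B[e_k] = e^{ik·x} Σ_j (i k_j a_k + ∂_j a_k) k_j / |k|²`
with `a_k = cosh(μ|k|(1+H)) / cosh²(μ|k|)`. As `|k_j| ≤ |k|`, `|H| ≤ c` and `|∂_j H| ≤ d`, each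
direction contributes at most `(1+μd) cosh(μ|k|(1+c)) / cosh²(μ|k|) ≤ 4(1+μd) e^{-(1-c)μ|k|}`.
So `‖B[e_k]‖²_{L²}` is dominated by a multiple of `e^{-2(1-c)μ|k|}`, which is summable over `ℤ²`
by comparison with a product of two geometric series.
-/

open Complex Real MeasureTheory

noncomputable def knorm (k : ℤ × ℤ) : ℝ := Real.sqrt ((k.1 : ℝ)^2 + (k.2 : ℝ)^2)

noncomputable def ek (k : ℤ × ℤ) (x : ℝ × ℝ) : ℂ :=
  Complex.exp (Complex.I * ((k.1 : ℝ) * x.1 + (k.2 : ℝ) * x.2))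

noncomputable def Bfield (μ : ℝ) (H : ℝ × ℝ → ℝ) (k : ℤ × ℤ) (x : ℝ × ℝ) : ℂ × ℂ :=
  (ek k x * ((Real.cosh (μ * knorm k * (1 + H x)) / (Real.cosh (μ * knorm k))^2 *
      ((k.1 : ℝ) / (knorm k)^2) : ℝ) : ℂ),
   ek k x * ((Real.cosh (μ * knorm k * (1 + H x)) / (Real.cosh (μ * knorm k))^2 *
      ((k.2 : ℝ) / (knorm k)^2) : ℝ) : ℂ))

/-- `B[e_k]`, the image of the canonical basis vector `e_k`: the single term
`∇·[e^{ik·x} cosh(μ|k|(1+H(x)))/cosh²(μ|k|) · k/|k|²]`. -/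
noncomputable def Bdiv (μ : ℝ) (H : ℝ × ℝ → ℝ) (k : ℤ × ℤ) (x : ℝ × ℝ) : ℂ :=
  deriv (fun t => (Bfield μ H k (t, x.2)).1) x.1 +
  deriv (fun t => (Bfield μ H k (x.1, t)).2) x.2

theorem HasDerivAt.cexp_I_mul_mul_ofReal {φ a : ℝ → ℝ} {φ' a' t : ℝ}
    (hφ : HasDerivAt φ φ' t) (ha : HasDerivAt a a' t) :
    HasDerivAt (fun s => cexp (I * φ s) * (a s : ℂ)) (cexp (I * φ t) * (I * φ' * a t + a')) t :=
  ((hφ.ofReal_comp.const_mul I).cexp.fun_mul ha.ofReal_comp).congr_deriv (by ring)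

theorem norm_cexp_I_mul_mul_add_le (θ φ' α a' : ℝ) :
    ‖cexp (I * θ) * (I * φ' * α + a')‖ ≤ |φ'| * |α| + |a'| := by
  rw [norm_mul, norm_exp_I_mul_ofReal, one_mul]
  refine (norm_add_le _ _).trans_eq ?_
  simp only [norm_mul, norm_I, Complex.norm_real, Real.norm_eq_abs, one_mul]

namespace Real

theorem cosh_le_exp_abs (x : ℝ) : cosh x ≤ exp |x| := by
  rw [← cosh_abs, cosh_eq]
  linarith [exp_le_exp.2 (neg_le_self (abs_nonneg x))]

theorem exp_abs_div_two_le_cosh (x : ℝ) : exp |x| / 2 ≤ cosh x := by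
  rw [← cosh_abs, cosh_eq]
  linarith [exp_pos (-|x|)]

theorem cosh_div_cosh_sq_le (a b : ℝ) : cosh b / cosh a ^ 2 ≤ 4 * exp (|b| - 2 * |a|) := by
  have hsq : exp (2 * |a|) / 4 ≤ cosh a ^ 2 := by
    have := pow_le_pow_left₀ (by positivity) (exp_abs_div_two_le_cosh a) 2
    rw [div_pow, ← exp_nat_mul] at this
    norm_num at this
    exact this
  calc cosh b / cosh a ^ 2 ≤ exp |b| / (exp (2 * |a|) / 4) :=
        div_le_div₀ (exp_nonneg _) (cosh_le_exp_abs b) (by positivity) hsq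
    _ = 4 * exp (|b| - 2 * |a|) := by rw [exp_sub]; field_simp

theorem abs_sinh_le_cosh (x : ℝ) : |sinh x| ≤ cosh x := by
  rw [abs_sinh, ← cosh_abs]
  exact (sinh_lt_cosh _).le

theorem cosh_mul_one_add_le {a b c : ℝ} (hb : |b| ≤ c) :
    cosh (a * (1 + b)) ≤ cosh (a * (1 + c)) := by
  rw [cosh_le_cosh, abs_mul, abs_mul a]
  refine mul_le_mul_of_nonneg_left ?_ (abs_nonneg _)
  calc |1 + b| ≤ 1 + |b| := (abs_add_le _ _).trans_eq (by rw [abs_one])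
    _ ≤ 1 + c := by linarith
    _ ≤ |1 + c| := le_abs_self _

end Real

theorem setIntegral_sq_norm_le {α E : Type*} [MeasurableSpace α] [NormedAddCommGroup E]
    {ν : Measure α} {s : Set α} (hs : ν s < ⊤) {f : α → E} {M : ℝ}
    (hf : ∀ x ∈ s, ‖f x‖ ≤ M) :
    ∫ x in s, ‖f x‖ ^ 2 ∂ν ≤ M ^ 2 * ν.real s := by
  refine (le_abs_self _).trans ?_
  rw [← Real.norm_eq_abs]
  refine norm_setIntegral_le_of_norm_le_const hs fun x hx => ?_
  rw [norm_pow, norm_norm]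
  exact pow_le_pow_left₀ (norm_nonneg _) (hf x hx) 2

theorem summable_exp_neg_mul_abs_int {a : ℝ} (ha : 0 < a) :
    Summable fun m : ℤ => Real.exp (-a * |(m : ℝ)|) := by
  have hnat : Summable fun n : ℕ => Real.exp (-a * n) := by
    simpa only [mul_comm] using Real.summable_exp_nat_mul_iff.2 (neg_lt_zero.2 ha)
  exact .of_nat_of_neg (by simpa using hnat) (by simpa using hnat)

theorem knorm_pos {k : ℤ × ℤ} (hk : k ≠ 0) : 0 < knorm k := by
  obtain ⟨a, b⟩ := k
  have hab : a ≠ 0 ∨ b ≠ 0 := by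
    contrapose! hk
    simp [hk]
  rw [knorm, Real.sqrt_pos]
  rcases hab with ha | hb <;> positivity

theorem abs_fst_le_knorm (k : ℤ × ℤ) : |(k.1 : ℝ)| ≤ knorm k :=
  Real.abs_le_sqrt (le_add_of_nonneg_right (sq_nonneg _))

theorem abs_snd_le_knorm (k : ℤ × ℤ) : |(k.2 : ℝ)| ≤ knorm k :=
  Real.abs_le_sqrt (le_add_of_nonneg_left (sq_nonneg _))

theorem summable_exp_neg_mul_knorm {ε : ℝ} (hε : 0 < ε) :
    Summable fun k : ℤ × ℤ => Real.exp (-ε * knorm k) := by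
  have h := summable_exp_neg_mul_abs_int (half_pos hε)
  refine (h.mul_of_nonneg h (fun _ => (Real.exp_pos _).le) fun _ => (Real.exp_pos _).le)
    |>.of_nonneg_of_le (fun _ => (Real.exp_pos _).le) fun k => ?_
  rw [← Real.exp_add, Real.exp_le_exp]
  nlinarith [abs_fst_le_knorm k, abs_snd_le_knorm k]

theorem ek_eq (k : ℤ × ℤ) (x : ℝ × ℝ) : ek k x = cexp (I * ↑(x.1 * k.1 + x.2 * k.2)) := by
  rw [ek]
  push_cast
  ring_nf

theorem norm_deriv_cexp_mul_cosh_le {μ c d κ n t : ℝ} {φ h : ℝ → ℝ} (hμ : 0 ≤ μ) (hn : 0 < n)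
    (hκ : |κ| ≤ n) (hφ : HasDerivAt φ κ t) (hh : DifferentiableAt ℝ h t) (hhc : |h t| ≤ c)
    (hhd : |deriv h t| ≤ d) :
    ‖deriv (fun s => cexp (I * φ s) *
        ((Real.cosh (μ * n * (1 + h s)) / Real.cosh (μ * n) ^ 2 * (κ / n ^ 2) : ℝ) : ℂ)) t‖ ≤
      (1 + μ * d) * (Real.cosh (μ * n * (1 + c)) / Real.cosh (μ * n) ^ 2) := by
  set D := Real.cosh (μ * n) ^ 2
  set K := Real.cosh (μ * n * (1 + c))
  set y := μ * n * (1 + h t)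
  have hcosh : Real.cosh y ≤ K := Real.cosh_mul_one_add_le hhc
  have ha : HasDerivAt (fun s => Real.cosh (μ * n * (1 + h s)) / D * (κ / n ^ 2))
      (Real.sinh y * (μ * n * deriv h t) / D * (κ / n ^ 2)) t :=
    (((hh.hasDerivAt.const_add 1).const_mul (μ * n)).cosh.div_const D).mul_const _
  rw [(hφ.cexp_I_mul_mul_ofReal ha).deriv]
  refine (norm_cexp_I_mul_mul_add_le _ _ _ _).trans ?_
  have hD : 0 < D := by positivity
  have hn2 : 0 < n ^ 2 := by positivity
  have e1 : |κ| * |Real.cosh y / D * (κ / n ^ 2)| = Real.cosh y / D * (|κ| / n) ^ 2 := by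
    rw [abs_mul, abs_div, abs_div, abs_of_pos (Real.cosh_pos y), abs_of_pos hD, abs_of_pos hn2]
    ring
  have e2 : |Real.sinh y * (μ * n * deriv h t) / D * (κ / n ^ 2)| =
      |Real.sinh y| / D * μ * |deriv h t| * (|κ| / n) := by
    rw [abs_mul, abs_div, abs_mul, abs_mul, abs_mul, abs_div, abs_of_nonneg hμ, abs_of_pos hn,
      abs_of_pos hD, abs_of_pos hn2]
    field_simp
  have hκn : |κ| / n ≤ 1 := (div_le_one hn).2 hκ
  have hsinh : |Real.sinh y| ≤ K := (Real.abs_sinh_le_cosh y).trans hcosh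
  have hd : 0 ≤ d := (abs_nonneg _).trans hhd
  rw [e1, e2]
  calc Real.cosh y / D * (|κ| / n) ^ 2 + |Real.sinh y| / D * μ * |deriv h t| * (|κ| / n)
      ≤ K / D * 1 + K / D * μ * d * 1 := by
        gcongr
        exact pow_le_one₀ (by positivity) hκn
    _ = (1 + μ * d) * (K / D) := by ring

theorem norm_Bdiv_le {μ c d : ℝ} {H : ℝ × ℝ → ℝ} (hμ : 0 ≤ μ) (hH : Differentiable ℝ H)
    (hHc : ∀ x, |H x| ≤ c)
    (hHx : ∀ x : ℝ × ℝ, |deriv (fun t => H (t, x.2)) x.1| ≤ d)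
    (hHy : ∀ x : ℝ × ℝ, |deriv (fun t => H (x.1, t)) x.2| ≤ d) {k : ℤ × ℤ} (hk : k ≠ 0)
    (x : ℝ × ℝ) :
    ‖Bdiv μ H k x‖ ≤
      2 * (1 + μ * d) * (Real.cosh (μ * knorm k * (1 + c)) / Real.cosh (μ * knorm k) ^ 2) := by
  rw [two_mul, add_mul]
  refine (norm_add_le _ _).trans (add_le_add ?_ ?_) <;> simp only [Bfield, ek_eq]
  · exact norm_deriv_cexp_mul_cosh_le (φ := fun t => t * k.1 + x.2 * k.2)
      (h := fun t => H (t, x.2)) hμ (knorm_pos hk) (abs_fst_le_knorm k)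
      ((hasDerivAt_mul_const _).add_const _) (by fun_prop) (hHc _) (hHx x)
  · exact norm_deriv_cexp_mul_cosh_le (φ := fun t => x.1 * k.1 + t * k.2)
      (h := fun t => H (x.1, t)) hμ (knorm_pos hk) (abs_snd_le_knorm k)
      ((hasDerivAt_mul_const _).const_add _) (by fun_prop) (hHc _) (hHy x)

theorem norm_Bdiv_le_exp {μ c d : ℝ} {H : ℝ × ℝ → ℝ} (hμ : 0 ≤ μ) (hH : Differentiable ℝ H)
    (hHc : ∀ x, |H x| ≤ c)
    (hHx : ∀ x : ℝ × ℝ, |deriv (fun t => H (t, x.2)) x.1| ≤ d)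
    (hHy : ∀ x : ℝ × ℝ, |deriv (fun t => H (x.1, t)) x.2| ≤ d) {k : ℤ × ℤ} (hk : k ≠ 0)
    (x : ℝ × ℝ) :
    ‖Bdiv μ H k x‖ ≤ 8 * (1 + μ * d) * Real.exp (-((1 - c) * μ) * knorm k) := by
  have hc : 0 ≤ c := (abs_nonneg _).trans (hHc 0)
  have hd : 0 ≤ d := (abs_nonneg _).trans (hHx 0)
  have hn : 0 ≤ μ * knorm k := mul_nonneg hμ (knorm_pos hk).le
  calc ‖Bdiv μ H k x‖
      ≤ 2 * (1 + μ * d) * (Real.cosh (μ * knorm k * (1 + c)) / Real.cosh (μ * knorm k) ^ 2) :=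
        norm_Bdiv_le hμ hH hHc hHx hHy hk x
    _ ≤ 2 * (1 + μ * d) * (4 * Real.exp (|μ * knorm k * (1 + c)| - 2 * |μ * knorm k|)) := by
        gcongr
        exact Real.cosh_div_cosh_sq_le _ _
    _ = 8 * (1 + μ * d) * Real.exp (-((1 - c) * μ) * knorm k) := by
        rw [abs_of_nonneg (by positivity), abs_of_nonneg hn]
        ring_nf

/-- the operator `B : ℓ²(Z²∖{0}) → L²(T²)` is Hilbert–Schmidt:
`Σ_{k≠0} ‖B[e_k]‖²_{L²(T²)} < ∞`. -/
theorem stmt9 (μ c d : ℝ) (hμ : 0 < μ) (hc : c < 1)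
    (H : ℝ × ℝ → ℝ) (hH : ContDiff ℝ 1 H)
    (hHc : ∀ x, |H x| ≤ c)
    (hHx : ∀ x : ℝ × ℝ, |deriv (fun t => H (t, x.2)) x.1| ≤ d)
    (hHy : ∀ x : ℝ × ℝ, |deriv (fun t => H (x.1, t)) x.2| ≤ d) :
    Summable (fun k : {k : ℤ × ℤ // k ≠ 0} =>
      ∫ x in (Set.Icc (0:ℝ) (2*π)) ×ˢ (Set.Icc (0:ℝ) (2*π)),
        ‖Bdiv μ H k.1 x‖^2) := by
  set Q := Set.Icc (0:ℝ) (2*π) ×ˢ Set.Icc (0:ℝ) (2*π)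
  have hQ : volume Q < ⊤ := (isCompact_Icc.prod isCompact_Icc).measure_lt_top
  have hε : 0 < 2 * ((1 - c) * μ) := by have := sub_pos.2 hc; positivity
  have hbound := ((summable_exp_neg_mul_knorm hε).mul_left
    ((8 * (1 + μ * d)) ^ 2 * volume.real Q)).subtype {k | k ≠ 0}
  refine hbound.of_nonneg_of_le (fun k => setIntegral_nonneg
    (measurableSet_Icc.prod measurableSet_Icc) fun _ _ => by positivity) fun k => ?_
  refine (setIntegral_sq_norm_le hQ fun x _ =>
    norm_Bdiv_le_exp hμ.le (hH.differentiable one_ne_zero) hHc hHx hHy k.2 x).trans_eq ?_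
  rw [Function.comp_apply, mul_pow, sq (Real.exp _), ← Real.exp_add]
  ring_nf
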